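/- Decomposition theorem: if A is a finite hoop and F a filter of A with least element l, then A is isomorphic to the ψ-product F ⋉_ψ (A/F), where ψ(X) = t_X ∨ l; the isomorphism is Ω(a) = (a ∨ l, a/F) with inverse Ω⁻¹(a, X) = a ∧ t_X. -/
import Mathlib


/-- A hoop: a commutative monoid with a residuation-like arrow satisfying
(H1) `x → x = 1`, (H2) `(x·y) → z = x → (y → z)`, (H3) `x·(x→y) = y·(y→x)`. -/
class Hoop (α : Type*) extends CommMonoid α where
  arr : α → α → α
  arr_self : ∀ x : α, arr x x = 1
  arr_mul : ∀ x y z : α, arr (x * y) z = arr x (arr y z)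
  divis : ∀ x y : α, x * arr x y = y * arr y x

namespace Hoop

variable {α β γ : Type*} [Hoop α] [Hoop β] [Hoop γ]

/-- The induced order: `x ≤ y` iff `x → y = 1`. -/
def hle (x y : α) : Prop := arr x y = 1

/-- The induced meet: `x ∧ y = x·(x → y)`. -/
def hmeet (x y : α) : α := x * arr x y

/-- `s` is the supremum of `x` and `y` in the induced order of the hoop. -/
def IsSup (x y s : α) : Prop :=
  hle x s ∧ hle y s ∧ ∀ t : α, hle x t → hle y t → hle s t

/-- A filter of a hoop: a nonempty up-set closed under multiplication. -/
def IsFilter (F : Set α) : Prop :=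
  F.Nonempty ∧ (∀ x ∈ F, ∀ y : α, hle x y → y ∈ F) ∧ ∀ x ∈ F, ∀ y ∈ F, x * y ∈ F

/-- The congruence induced by a filter: `x θ_F y` iff `(x→y)·(y→x) ∈ F`. -/
def frel (F : Set α) (x y : α) : Prop := arr x y * arr y x ∈ F

section Basics
variable {α : Type*} [Hoop α]

lemma hle_refl (x : α) : hle x x := arr_self x

lemma arr_one (x : α) : arr x 1 = 1 := by
  have step2 : arr 1 x = x * arr x 1 := by
    have := divis (1 : α) x; rwa [one_mul] at this
  have step3 : arr x 1 * arr (arr x 1) 1 = arr x 1 := by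
    have h := divis (arr x 1) (1 : α)
    rw [one_mul, ← arr_mul, one_mul] at h
    exact h
  have step1 : arr x (arr 1 x) = 1 := by
    rw [← arr_mul, mul_one, arr_self]
  have step4 : x = arr 1 x * arr (arr 1 x) x := by
    have h := divis x (arr 1 x); rwa [step1, mul_one] at h
  have step5 : arr (arr 1 x) x = arr (arr x 1) 1 := by
    rw [step2, mul_comm, arr_mul, arr_self]
  have step6 : x * arr x 1 = x := by
    conv_rhs => rw [step4, step5, step2]
    rw [mul_assoc, step3]
  conv_lhs => rw [← step6]
  rw [mul_comm, arr_mul, arr_self]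

lemma one_arr (x : α) : arr 1 x = x := by
  have := divis (1 : α) x
  rwa [one_mul, arr_one, mul_one] at this

lemma hle_one (x : α) : hle x 1 := arr_one x

lemma resid {x y z : α} : hle (x * y) z ↔ hle x (arr y z) := by
  unfold hle; rw [arr_mul]

lemma hle_of_eq {x y : α} (h : x = y) : hle x y := h ▸ hle_refl x

lemma mul_le_left (x y : α) : hle (x * y) x := by
  unfold hle; rw [mul_comm, arr_mul, arr_self, arr_one]

lemma mul_le_right (x y : α) : hle (x * y) y := by
  rw [mul_comm]; exact mul_le_left y x

lemma hmeet_le_right (x y : α) : hle (hmeet x y) y := by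
  unfold hmeet hle; rw [mul_comm, arr_mul, arr_self]

lemma hmeet_le_left (x y : α) : hle (hmeet x y) x := by
  unfold hmeet; rw [divis x y]; exact hmeet_le_right y x

lemma le_arr (x y : α) : hle y (arr x y) := by
  rw [← resid, mul_comm]; exact mul_le_right x y

lemma eq_mul_of_le {x y : α} (h : hle x y) : x = y * arr y x := by
  have := divis x y; rwa [h, mul_one] at this

lemma hle_trans {x y z : α} (hxy : hle x y) (hyz : hle y z) : hle x z := by
  unfold hle
  rw [eq_mul_of_le hxy, mul_comm, arr_mul, hyz, arr_one]

lemma hle_antisymm {x y : α} (hxy : hle x y) (hyx : hle y x) : x = y := by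
  rw [eq_mul_of_le hxy, hyx, mul_one]

lemma mul_le_mul_left {x y : α} (z : α) (h : hle x y) : hle (z * x) (z * y) := by
  have hx : z * x = (z * y) * arr y x := by
    rw [mul_assoc, ← eq_mul_of_le h]
  rw [hx]; exact mul_le_left _ _

lemma mul_le_mul_right {x y : α} (z : α) (h : hle x y) : hle (x * z) (y * z) := by
  rw [mul_comm x z, mul_comm y z]; exact mul_le_mul_left z h

lemma mul_le_mul {a b c d : α} (h1 : hle a b) (h2 : hle c d) : hle (a * c) (b * d) :=
  hle_trans (mul_le_mul_left a h2) (mul_le_mul_right d h1)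

lemma arr_le_arr_left {x y : α} (z : α) (h : hle x y) : hle (arr y z) (arr x z) := by
  rw [← resid]
  refine hle_trans (mul_le_mul_left (arr y z) h) ?_
  rw [mul_comm]; exact hmeet_le_right y z

lemma arr_le_arr_right {x y : α} (z : α) (h : hle x y) : hle (arr z x) (arr z y) := by
  rw [← resid] at *
  exact hle_trans (hle_of_eq (mul_comm _ _)) (hle_trans (hmeet_le_right z x) h)

lemma le_hmeet {x y z : α} (hx : hle z x) (hy : hle z y) : hle z (hmeet x y) := by
  have h1 : z = x * arr x z := eq_mul_of_le hx
  have h2 : hle (arr x z) (arr x y) := arr_le_arr_right x hy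
  rw [h1]; exact mul_le_mul_left x h2

lemma arr_trans_mul {x y z : α} : hle (arr x y * arr y z) (arr x z) := by
  rw [← resid]
  have e : arr x y * arr y z * x = x * arr x y * arr y z := by
    rw [mul_comm _ x, ← mul_assoc]
  refine hle_trans (hle_of_eq e) ?_
  refine hle_trans (mul_le_mul_right (arr y z) (hmeet_le_right x y)) ?_
  exact hmeet_le_right y z

end Basics

section SupFilter
variable {α : Type*} [Hoop α] {F : Set α}

lemma isSup_unique {x y u v : α} (hu : IsSup x y u) (hv : IsSup x y v) : u = v :=
  hle_antisymm (hu.2.2 v hv.1 hv.2.1) (hv.2.2 u hu.1 hu.2.1)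

lemma mul_isSup {u x y j : α} (hj : IsSup x y j) : IsSup (u * x) (u * y) (u * j) := by
  refine ⟨mul_le_mul_left u hj.1, mul_le_mul_left u hj.2.1, ?_⟩
  intro c h1 h2
  rw [mul_comm u x, resid] at h1
  rw [mul_comm u y, resid] at h2
  rw [mul_comm u j, resid]
  exact hj.2.2 _ h1 h2

lemma one_mem (hF : IsFilter F) : (1 : α) ∈ F := by
  obtain ⟨⟨w, hw⟩, up, _⟩ := hF
  exact up w hw 1 (hle_one w)

lemma mem_of_le (hF : IsFilter F) {x y : α} (hx : x ∈ F) (h : hle x y) : y ∈ F :=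
  hF.2.1 x hx y h

lemma mul_mem (hF : IsFilter F) {x y : α} (hx : x ∈ F) (hy : y ∈ F) : x * y ∈ F :=
  hF.2.2 x hx y hy

lemma frel_iff (hF : IsFilter F) {x y : α} :
    frel F x y ↔ arr x y ∈ F ∧ arr y x ∈ F := by
  constructor
  · intro h
    exact ⟨mem_of_le hF h (mul_le_left _ _), mem_of_le hF h (mul_le_right _ _)⟩
  · rintro ⟨h1, h2⟩
    exact mul_mem hF h1 h2

lemma frel_refl (hF : IsFilter F) (x : α) : frel F x x := by
  unfold frel; rw [arr_self, one_mul]; exact one_mem hF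

lemma frel_symm {x y : α} (h : frel F x y) : frel F y x := by
  unfold frel at *; rwa [mul_comm]

lemma frel_trans (hF : IsFilter F) {x y z : α} (h1 : frel F x y) (h2 : frel F y z) :
    frel F x z := by
  rw [frel_iff hF] at *
  exact ⟨mem_of_le hF (mul_mem hF h1.1 h2.1) arr_trans_mul,
         mem_of_le hF (mul_mem hF h2.2 h1.2) arr_trans_mul⟩

lemma arr_mul_le {a b c d : α} : hle (arr a b * arr c d) (arr (a * c) (b * d)) := by
  rw [← resid]
  have e : arr a b * arr c d * (a * c) = (a * arr a b) * (c * arr c d) := by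
    rw [mul_mul_mul_comm, mul_comm (arr a b) a, mul_comm (arr c d) c]
  exact hle_trans (hle_of_eq e) (mul_le_mul (hmeet_le_right a b) (hmeet_le_right c d))

lemma frel_mul (hF : IsFilter F) {x y u v : α} (h1 : frel F x y) (h2 : frel F u v) :
    frel F (x * u) (y * v) := by
  rw [frel_iff hF] at *
  exact ⟨mem_of_le hF (mul_mem hF h1.1 h2.1) arr_mul_le,
         mem_of_le hF (mul_mem hF h1.2 h2.2) arr_mul_le⟩

lemma arr_arr_le {x y u v : α} : hle (arr y x * arr u v) (arr (arr x u) (arr y v)) := by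
  rw [← resid, ← resid]
  have e : arr y x * arr u v * arr x u * y = ((y * arr y x) * arr x u) * arr u v := by
    ac_rfl
  refine hle_trans (hle_of_eq e) ?_
  refine hle_trans (mul_le_mul_right _ (mul_le_mul_right _ (hmeet_le_right y x))) ?_
  refine hle_trans (mul_le_mul_right _ (hmeet_le_right x u)) ?_
  exact hmeet_le_right u v

lemma frel_arr (hF : IsFilter F) {x y u v : α} (h1 : frel F x y) (h2 : frel F u v) :
    frel F (arr x u) (arr y v) := by
  rw [frel_iff hF] at *
  exact ⟨mem_of_le hF (mul_mem hF h1.2 h2.1) arr_arr_le,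
         mem_of_le hF (mul_mem hF h1.1 h2.2) arr_arr_le⟩

lemma isSup_mul {u x y j : α} (hj : IsSup x y j) : IsSup (x * u) (y * u) (j * u) := by
  rw [mul_comm x u, mul_comm y u, mul_comm j u]
  exact mul_isSup hj

end SupFilter


/-- Decomposition theorem: a finite hoop `A` with a filter `F` (least element
`l`) is isomorphic to `F ⋉_ψ (A/F)` where `ψ(X) = t_X ∨ l`, via
`Ω(a) = (a ∨ l, a/F)` with inverse `Ω⁻¹(u, X) = u ∧ t_X`.  Classes of `A/F`
are represented by their top elements (fixed points of the top-of-class map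
`t`), and `s` is the binary-supremum map. -/
theorem decomposition [Fintype α] (F : Set α) (hF : IsFilter F)
    (l : α) (hl : l ∈ F ∧ ∀ a ∈ F, hle l a)
    (t : α → α)
    (ht : ∀ a : α, frel F a (t a) ∧ ∀ c : α, frel F a c → hle c (t a))
    (s : α → α → α) (hs : ∀ a b : α, IsSup a b (s a b)) :
    ∃ Ω : α ≃ {p : α × α // p.1 ∈ F ∧ t p.2 = p.2 ∧ hle p.1 (s p.2 l)},
      -- Ω(a) = (a ∨ l, a/F)
      (∀ a : α, (Ω a).val = (s a l, t a)) ∧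
      -- Ω⁻¹(u, X) = u ∧ t_X
      (∀ p, Ω.symm p = hmeet p.val.1 p.val.2) ∧
      -- Ω preserves multiplication (componentwise in `F ⋉_ψ (A/F)`)
      (∀ a b : α, s (a * b) l = s a l * s b l ∧ t (a * b) = t (t a * t b)) ∧
      -- Ω preserves the arrow: Ω(a→b) = (ψ(X→Y) ∧ (Ω₁a → Ω₁b), X→Y)
      (∀ a b : α,
        s (arr a b) l = hmeet (s (t (arr (t a) (t b))) l) (arr (s a l) (s b l)) ∧
        t (arr a b) = t (arr (t a) (t b))) := by
  obtain ⟨hlF, hlmin⟩ := hl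
  have tfrel : ∀ a, frel F a (t a) := fun a => (ht a).1
  have tmax : ∀ a c, frel F a c → hle c (t a) := fun a => (ht a).2
  have le_t : ∀ a, hle a (t a) := fun a => tmax a a (frel_refl hF a)
  have t_eq_of_frel : ∀ {a b}, frel F a b → t a = t b := by
    intro a b h
    refine hle_antisymm (tmax b (t a) ?_) (tmax a (t b) ?_)
    · exact frel_trans hF (frel_symm h) (tfrel a)
    · exact frel_trans hF h (tfrel b)
  have t_idem : ∀ a, t (t a) = t a :=
    fun a => t_eq_of_frel (frel_symm (tfrel a))
  have arr_t_mem : ∀ a, arr (t a) a ∈ F := fun a => ((frel_iff hF).1 (tfrel a)).2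
  have l_idem : l * l = l :=
    hle_antisymm (mul_le_left l l) (hlmin _ (mul_mem hF hlF hlF))
  have le_sup_l : ∀ a b, hle a (s a b) := fun a b => (hs a b).1
  have le_sup_r : ∀ a b, hle b (s a b) := fun a b => (hs a b).2.1
  have sup_le : ∀ a b c, hle a c → hle b c → hle (s a b) c :=
    fun a b c h1 h2 => (hs a b).2.2 c h1 h2
  -- Lemma L : if x→b ∈ F then x ≤ t b
  have le_t_of_arr_mem : ∀ x b, arr x b ∈ F → hle x (t b) := by
    intro x b hx
    have h1 : hle (arr x b) (arr (s x b) b) := by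
      rw [← resid]
      refine (mul_isSup (u := arr x b) (hs x b)).2.2 b ?_ ?_
      · exact hle_trans (hle_of_eq (mul_comm _ _)) (hmeet_le_right x b)
      · exact mul_le_right _ _
    have h3 : frel F b (s x b) := by
      rw [frel_iff hF]
      constructor
      · have e : arr b (s x b) = 1 := le_sup_r x b
        rw [e]; exact one_mem hF
      · exact mem_of_le hF hx h1
    exact hle_trans (le_sup_l x b) (tmax b _ h3)
  -- z ≤ l and z ≤ t a imply z ≤ a
  have meet_lt_le : ∀ z a, hle z l → hle z (t a) → hle z a := by
    intro z a h1 h2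
    have hz : z = l * arr l z := eq_mul_of_le h1
    have hz2 : l * z = z := by
      calc l * z = l * (l * arr l z) := by rw [← hz]
        _ = (l * l) * arr l z := (mul_assoc _ _ _).symm
        _ = l * arr l z := by rw [l_idem]
        _ = z := hz.symm
    have hla : hle l (arr (t a) a) := hlmin _ (arr_t_mem a)
    have h3 : hle (l * z) ((arr (t a) a) * t a) := mul_le_mul hla h2
    have h4 : hle ((arr (t a) a) * t a) a := by
      rw [mul_comm]; exact hmeet_le_right (t a) a
    exact hle_trans (hle_of_eq hz2.symm) (hle_trans h3 h4)
  -- injectivity key : a = (a ∨ l) ∧ t a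
  have inj_key : ∀ a, hmeet (s a l) (t a) = a := by
    intro a
    refine hle_antisymm ?_ (le_hmeet (le_sup_l a l) (le_t a))
    have hsup : IsSup (a * arr (s a l) (t a)) (l * arr (s a l) (t a))
        (s a l * arr (s a l) (t a)) := isSup_mul (hs a l)
    show hle (s a l * arr (s a l) (t a)) a
    refine hsup.2.2 a ?_ ?_
    · exact mul_le_left a _
    · refine meet_lt_le _ a (mul_le_left l _) ?_
      refine hle_trans (mul_le_mul_right _ (le_sup_r a l)) ?_
      exact hmeet_le_right (s a l) (t a)
  -- surjectivity keys
  have surj_t : ∀ u X, u ∈ F → t (hmeet u X) = t X := by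
    intro u X hu
    refine t_eq_of_frel ?_
    rw [frel_iff hF]
    constructor
    · have e : arr (hmeet u X) X = 1 := hmeet_le_right u X
      rw [e]; exact one_mem hF
    · refine mem_of_le hF hu ?_
      exact resid.mp (le_hmeet (mul_le_left u X) (mul_le_right u X))
  have surj_s : ∀ u X, u ∈ F → hle u (s X l) → s (hmeet u X) l = u := by
    intro u X hu hux
    refine isSup_unique (hs _ l) ⟨hmeet_le_left u X, hlmin u hu, ?_⟩
    intro c h1 h2
    have hu' : u = (s X l) * arr (s X l) u := eq_mul_of_le hux
    have hsup : IsSup (X * arr (s X l) u) (l * arr (s X l) u)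
        (s X l * arr (s X l) u) := isSup_mul (hs X l)
    have goal2 : hle (s X l * arr (s X l) u) c := by
      refine hsup.2.2 c ?_ ?_
      · refine hle_trans (le_hmeet ?_ (mul_le_left X _)) h1
        exact hle_trans (mul_le_mul_right _ (le_sup_l X l)) (hle_of_eq hu'.symm)
      · exact hle_trans (mul_le_left l _) h2
    exact hle_trans (hle_of_eq hu') goal2
  -- multiplication bullet
  have smul : ∀ a b, s (a * b) l = s a l * s b l := by
    intro a b
    refine isSup_unique (hs (a * b) l) ?_
    refine ⟨mul_le_mul (le_sup_l a l) (le_sup_l b l), ?_, ?_⟩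
    · exact hle_trans (hle_of_eq l_idem.symm)
        (mul_le_mul (le_sup_r a l) (le_sup_r b l))
    · intro c h1 h2
      have hsup1 : IsSup (s a l * b) (s a l * l) (s a l * s b l) := mul_isSup (hs b l)
      refine hsup1.2.2 c ?_ ?_
      · have hsup2 : IsSup (b * a) (b * l) (b * s a l) := mul_isSup (hs a l)
        refine hle_trans (hle_of_eq (mul_comm _ _)) (hsup2.2.2 c ?_ ?_)
        · exact hle_trans (hle_of_eq (mul_comm b a)) h1
        · exact hle_trans (mul_le_right b l) h2
      · exact hle_trans (mul_le_right _ l) h2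
  have tmul : ∀ a b, t (a * b) = t (t a * t b) :=
    fun a b => t_eq_of_frel (frel_mul hF (tfrel a) (tfrel b))
  have tarr : ∀ a b, t (arr a b) = t (arr (t a) (t b)) :=
    fun a b => t_eq_of_frel (frel_arr hF (tfrel a) (tfrel b))
  -- arrow bullet
  have sarr : ∀ a b,
      s (arr a b) l = hmeet (s (t (arr (t a) (t b))) l) (arr (s a l) (s b l)) := by
    intro a b
    have hD : t (arr a b) = t (arr (t a) (t b)) := tarr a b
    have hdD : hle (arr a b) (t (arr (t a) (t b))) := hD ▸ le_t (arr a b)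
    have hDd : arr (t (arr (t a) (t b))) (arr a b) ∈ F := hD ▸ arr_t_mem (arr a b)
    have hdr : hle (arr a b) (arr (s a l) (s b l)) := by
      rw [← resid]
      have hsup : IsSup (arr a b * a) (arr a b * l) (arr a b * s a l) :=
        mul_isSup (hs a l)
      refine hsup.2.2 _ ?_ ?_
      · exact hle_trans (hle_of_eq (mul_comm _ a))
          (hle_trans (hmeet_le_right a b) (le_sup_l b l))
      · exact hle_trans (mul_le_right _ l) (le_sup_r b l)
    have hlr : hle l (arr (s a l) (s b l)) := by
      rw [← resid]
      exact hle_trans (mul_le_left l _) (le_sup_r b l)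
    have key : ∀ c, hle c (t (arr (t a) (t b))) → hle c (arr (s a l) (s b l)) →
        hle c (arr a b) := by
      intro c h1 h2
      rw [← resid]
      have hca1 : hle (c * a) (s b l) := by
        refine hle_trans (mul_le_mul h2 (le_sup_l a l)) ?_
        exact hle_trans (hle_of_eq (mul_comm _ (s a l)))
          (hmeet_le_right (s a l) (s b l))
      have hca2 : hle (c * a) (t b) := by
        refine le_t_of_arr_mem _ b ?_
        rw [arr_mul]
        exact mem_of_le hF hDd (arr_le_arr_left (arr a b) h1)
      exact hle_trans (le_hmeet hca1 hca2) (hle_of_eq (inj_key b))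
    refine hle_antisymm ?_ ?_
    · refine le_hmeet ?_ (sup_le _ l _ hdr hlr)
      exact sup_le _ l _ (hle_trans hdD (le_sup_l _ l)) (le_sup_r _ l)
    · set D := t (arr (t a) (t b)) with hDdef
      set r := arr (s a l) (s b l) with hrdef
      have hsup : IsSup (D * arr (s D l) r) (l * arr (s D l) r)
          (s D l * arr (s D l) r) := isSup_mul (hs D l)
      show hle (s D l * arr (s D l) r) (s (arr a b) l)
      refine hsup.2.2 _ ?_ ?_
      · refine hle_trans (key _ (mul_le_left D _) ?_) (le_sup_l (arr a b) l)
        exact hle_trans (mul_le_mul_right _ (le_sup_l D l)) (hmeet_le_right (s D l) r)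
      · exact hle_trans (mul_le_left l _) (le_sup_r (arr a b) l)
  -- build the equivalence
  refine ⟨{
      toFun := fun a => ⟨(s a l, t a), mem_of_le hF hlF (le_sup_r a l), t_idem a,
        sup_le a l _ (hle_trans (le_t a) (le_sup_l (t a) l)) (le_sup_r (t a) l)⟩
      invFun := fun p => hmeet p.val.1 p.val.2
      left_inv := fun a => inj_key a
      right_inv := by
        rintro ⟨⟨u, X⟩, hu, hX, hux⟩
        apply Subtype.ext
        dsimp only
        have h1 : s (hmeet u X) l = u := surj_s u X hu hux
        have h2 : t (hmeet u X) = X := by rw [surj_t u X hu, hX]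
        rw [h1, h2] }, fun a => rfl, fun p => rfl, fun a b => ⟨smul a b, tmul a b⟩,
      fun a b => ⟨sarr a b, tarr a b⟩⟩

end Hoop
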